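/- Let s and t be positive integers with s dividing t, and let ζ_s be a primitive s-th root of unity in the cyclotomic field Q(ζ_t). Then the field trace Tr_{Q(ζ_t)/Q}(ζ_s) equals μ(s) · φ(t)/φ(s), where μ is the Möbius function and φ is Euler's totient function. -/

import Mathlib

/-!
The minimal polynomial of `ζ` over `ℚ` is `Φ_s`, so `Tr(ζ) = [ℚ(ζ_t) : ℚ(ζ)] · (-nextCoeff Φ_s)`,
and `[ℚ(ζ_t) : ℚ(ζ)] = φ(t) / φ(s)`. Comparing second coefficients in `X ^ n - 1 = ∏_{d ∣ n} Φ_d`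
shows that `d ↦ -nextCoeff Φ_d` has the same divisor sums as `μ`, so by Möbius inversion
`nextCoeff Φ_n = -μ(n)`.
-/

open Polynomial Module IntermediateField

namespace ArithmeticFunction

theorem eq_of_sum_divisors_eq {R : Type*} [AddCommGroup R] {f g : ℕ → R}
    (h : ∀ n > 0, ∑ d ∈ n.divisors, f d = ∑ d ∈ n.divisors, g d) {n : ℕ} (hn : 0 < n) :
    f n = g n := by
  set G : ℕ → R := fun m => ∑ d ∈ m.divisors, g d
  rw [← sum_eq_iff_sum_smul_moebius_eq (f := f) (g := G) |>.mp h n hn,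
    sum_eq_iff_sum_smul_moebius_eq (f := g) (g := G) |>.mp (fun _ _ => rfl) n hn]

theorem sum_divisors_moebius {R : Type*} [Ring R] (n : ℕ) :
    ∑ d ∈ n.divisors, (moebius d : R) = if n = 1 then 1 else 0 := by
  rw [← one_apply (R := R), ← coe_moebius_mul_coe_zeta, coe_mul_zeta_apply]
  simp

end ArithmeticFunction

namespace Polynomial

theorem nextCoeff_X_pow_sub_one {R : Type*} [Ring R] [Nontrivial R] {n : ℕ} (hn : 0 < n) :
    (X ^ n - 1 : R[X]).nextCoeff = if n = 1 then -1 else 0 := by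
  have hdeg : (X ^ n - 1 : R[X]).natDegree = n := by
    simpa using natDegree_X_pow_sub_C (n := n) (r := (1 : R))
  rw [nextCoeff_of_natDegree_pos (by rwa [hdeg]), hdeg, coeff_sub, coeff_X_pow, coeff_one]
  split_ifs <;> first | omega | simp

theorem sum_divisors_nextCoeff_cyclotomic (R : Type*) [CommRing R] {n : ℕ} (hn : 0 < n) :
    ∑ d ∈ n.divisors, (cyclotomic d R).nextCoeff = (X ^ n - 1 : R[X]).nextCoeff := by
  rw [← prod_cyclotomic_eq_X_pow_sub_one hn,
    Monic.nextCoeff_prod _ _ fun d _ => cyclotomic.monic d R]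

theorem nextCoeff_cyclotomic (R : Type*) [CommRing R] [Nontrivial R] {n : ℕ} (hn : 0 < n) :
    (cyclotomic n R).nextCoeff = -ArithmeticFunction.moebius n := by
  rw [← neg_eq_iff_eq_neg]
  refine ArithmeticFunction.eq_of_sum_divisors_eq (f := fun d => -(cyclotomic d R).nextCoeff)
    (g := fun d => (ArithmeticFunction.moebius d : R)) (fun m hm => ?_) hn
  rw [Finset.sum_neg_distrib, sum_divisors_nextCoeff_cyclotomic R hm, nextCoeff_X_pow_sub_one hm,
    ArithmeticFunction.sum_divisors_moebius]
  split_ifs <;> simp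

end Polynomial

theorem IntermediateField.finrank_adjoin_simple_mul_natDegree_minpoly {K L : Type*} [Field K]
    [Field L] [Algebra K L] [FiniteDimensional K L] (x : L) :
    finrank K⟮x⟯ L * (minpoly K x).natDegree = finrank K L := by
  rw [← adjoin.finrank (.of_finite K x), mul_comm, finrank_mul_finrank]

-- The `ℚ`-algebra structure found by instance search is `DivisionRing.toRatAlgebra`, not the
-- one for which `CyclotomicField.isCyclotomicExtension` is stated; they agree by subsingleton.
theorem CyclotomicField.finrank_rat (n : ℕ) [NeZero n] :
    finrank ℚ (CyclotomicField n ℚ) = n.totient := by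
  convert IsCyclotomicExtension.finrank (CyclotomicField n ℚ)
    (cyclotomic.irreducible_rat (NeZero.pos n)) using 0
  convert CyclotomicField.isCyclotomicExtension n ℚ
  exact Subsingleton.elim _ _

theorem trace_primitive_root_eq_moebius_mul_totient_div_general
    (s t : ℕ+)
    (ζ : CyclotomicField t ℚ) (hζ : IsPrimitiveRoot ζ (s : ℕ)) :
    Algebra.trace ℚ (CyclotomicField t ℚ) ζ =
      ((ArithmeticFunction.moebius (s : ℕ) : ℤ) : ℚ) *
        (((t : ℕ).totient : ℚ) / ((s : ℕ).totient : ℚ)) := by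
  have hmin : minpoly ℚ ζ = cyclotomic s ℚ := (cyclotomic_eq_minpoly_rat hζ s.pos).symm
  have hdeg : finrank ℚ⟮ζ⟯ (CyclotomicField t ℚ) * (s : ℕ).totient = (t : ℕ).totient := by
    rw [← CyclotomicField.finrank_rat t, ← natDegree_cyclotomic s ℚ, ← hmin]
    exact finrank_adjoin_simple_mul_natDegree_minpoly ζ
  rw [trace_eq_finrank_mul_minpoly_nextCoeff, hmin, nextCoeff_cyclotomic ℚ s.pos, neg_neg, ← hdeg]
  push_cast
  field_simp

theorem trace_primitive_root_eq_moebius_mul_totient_div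
    (s t : ℕ+) (hst : (s : ℕ) ∣ (t : ℕ))
    (ζ : CyclotomicField t ℚ) (hζ : IsPrimitiveRoot ζ (s : ℕ)) :
    Algebra.trace ℚ (CyclotomicField t ℚ) ζ =
      ((ArithmeticFunction.moebius (s : ℕ) : ℤ) : ℚ) *
        (((t : ℕ).totient : ℚ) / ((s : ℕ).totient : ℚ)) :=
  trace_primitive_root_eq_moebius_mul_totient_div_general s t ζ hζ
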